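/- The lower semicontinuous polyconvex envelope of an isotropic function W : ℝ^{d×d} → ℝ ∪ {∞} is isotropic. -/

import Mathlib

open Matrix

noncomputable section

abbrev Mat (d : ℕ) := Matrix (Fin d) (Fin d) ℝ

def SO (d : ℕ) : Set (Mat d) := {R | R * Rᵀ = 1 ∧ R.det = 1}

def Isotropic {d : ℕ} {α : Type*} (W : Mat d → α) : Prop :=
  ∀ (F R₁ R₂ : Mat d), R₁ ∈ SO d → R₂ ∈ SO d → W (R₁ * F * R₂) = W F

def ConvexE {V : Type*} [AddCommGroup V] [Module ℝ V] (g : V → EReal) : Prop :=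
  ∀ (x y : V) (a b : ℝ), 0 ≤ a → 0 ≤ b → a + b = 1 →
    g (a • x + b • y) ≤ (a : EReal) * g x + (b : EReal) * g y

/-- The minors map for `d = 2`: `𝓜(F) = (F, det F) ∈ ℝ⁵`. -/
def M2 (F : Mat 2) : Fin 5 → ℝ := ![F 0 0, F 0 1, F 1 0, F 1 1, F.det]

/-- `V` is lower semicontinuous polyconvex. -/
def LscPolyconvex (V : Mat 2 → EReal) : Prop :=
  ∃ G : (Fin 5 → ℝ) → EReal, ConvexE G ∧ LowerSemicontinuous G ∧ ∀ F, V F = G (M2 F)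

/-- The lsc-polyconvex envelope: the pointwise supremum of all lsc-polyconvex
functions below `W`. -/
def lscPcEnvelope (W : Mat 2 → EReal) (F : Mat 2) : EReal :=
  sSup {y | ∃ V : Mat 2 → EReal, LscPolyconvex V ∧ (∀ F', V F' ≤ W F') ∧ y = V F}

/-!
Precomposing with `F ↦ R₁ * F * R₂` acts on the minors `(F, det F)` by a linear map, so it
preserves lsc-polyconvexity. For an isotropic `W` and rotations `R₁, R₂`, the function
`F ↦ V (R₁ᵀ * F * R₂ᵀ)` is therefore a competitor in the envelope whenever `V` is, which gives
`W^{lsc-pc} F ≤ W^{lsc-pc} (R₁ * F * R₂)`; the reverse inequality is the same statement for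
`R₁ᵀ, R₂ᵀ`.
-/

def matOfMinors (x : Fin 5 → ℝ) : Mat 2 := !![x 0, x 1; x 2, x 3]

lemma matOfMinors_add (x y : Fin 5 → ℝ) :
    matOfMinors (x + y) = matOfMinors x + matOfMinors y := by
  ext i j; fin_cases i <;> fin_cases j <;> simp [matOfMinors]

lemma matOfMinors_smul (a : ℝ) (x : Fin 5 → ℝ) : matOfMinors (a • x) = a • matOfMinors x := by
  ext i j; fin_cases i <;> fin_cases j <;> simp [matOfMinors]

lemma matOfMinors_M2 (F : Mat 2) : matOfMinors (M2 F) = F := by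
  ext i j; fin_cases i <;> fin_cases j <;> simp [matOfMinors, M2]

def minorsMulMul (R₁ R₂ : Mat 2) : (Fin 5 → ℝ) →ₗ[ℝ] (Fin 5 → ℝ) where
  toFun x :=
    let G := R₁ * matOfMinors x * R₂
    ![G 0 0, G 0 1, G 1 0, G 1 1, R₁.det * x 4 * R₂.det]
  map_add' x y := by
    funext i
    fin_cases i <;> simp [matOfMinors_add, Matrix.mul_add, Matrix.add_mul]
    ring
  map_smul' a x := by
    funext i
    fin_cases i <;> simp [matOfMinors_smul]
    ring

lemma minorsMulMul_M2 (R₁ R₂ F : Mat 2) :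
    minorsMulMul R₁ R₂ (M2 F) = M2 (R₁ * F * R₂) := by
  simp only [minorsMulMul, LinearMap.coe_mk, AddHom.coe_mk, matOfMinors_M2]
  funext i
  fin_cases i <;> simp [M2, Matrix.det_mul]

lemma ConvexE.comp_linearMap {V W : Type*} [AddCommGroup V] [Module ℝ V] [AddCommGroup W]
    [Module ℝ W] {g : W → EReal} (hg : ConvexE g) (f : V →ₗ[ℝ] W) : ConvexE (g ∘ f) := by
  intro x y a b ha hb hab
  simpa using hg (f x) (f y) a b ha hb hab

lemma LscPolyconvex.comp_mul_mul {V : Mat 2 → EReal} (hV : LscPolyconvex V) (R₁ R₂ : Mat 2) :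
    LscPolyconvex (fun F => V (R₁ * F * R₂)) := by
  obtain ⟨G, hG_convex, hG_lsc, hVG⟩ := hV
  refine ⟨G ∘ minorsMulMul R₁ R₂, hG_convex.comp_linearMap _,
    hG_lsc.comp (minorsMulMul R₁ R₂).continuous_of_finiteDimensional, fun F => ?_⟩
  rw [Function.comp_apply, minorsMulMul_M2]
  exact hVG _

lemma LscPolyconvex.le_lscPcEnvelope {V W : Mat 2 → EReal} (hV : LscPolyconvex V)
    (hVW : ∀ F, V F ≤ W F) (F : Mat 2) : V F ≤ lscPcEnvelope W F :=
  le_sSup ⟨V, hV, hVW, rfl⟩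

lemma transpose_mem_SO {d : ℕ} {R : Mat d} (hR : R ∈ SO d) : Rᵀ ∈ SO d :=
  ⟨by rw [transpose_transpose]; exact mul_eq_one_comm.mp hR.1, by rw [det_transpose]; exact hR.2⟩

lemma transpose_mul_mul_mul_transpose_of_mem_SO {d : ℕ} {R₁ R₂ : Mat d} (hR₁ : R₁ ∈ SO d)
    (hR₂ : R₂ ∈ SO d) (F : Mat d) : R₁ᵀ * (R₁ * F * R₂) * R₂ᵀ = F := by
  rw [Matrix.mul_assoc, Matrix.mul_assoc, hR₂.1, Matrix.mul_one, ← Matrix.mul_assoc,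
    mul_eq_one_comm.mp hR₁.1, Matrix.one_mul]

lemma lscPcEnvelope_le_apply_mul_mul {W : Mat 2 → EReal} (hW : Isotropic W) {R₁ R₂ : Mat 2}
    (hR₁ : R₁ ∈ SO 2) (hR₂ : R₂ ∈ SO 2) (F : Mat 2) :
    lscPcEnvelope W F ≤ lscPcEnvelope W (R₁ * F * R₂) := by
  refine sSup_le ?_
  rintro _ ⟨V, hV, hVW, rfl⟩
  have hV' : ∀ F', V (R₁ᵀ * F' * R₂ᵀ) ≤ W F' := fun F' =>
    (hVW _).trans_eq (hW F' _ _ (transpose_mem_SO hR₁) (transpose_mem_SO hR₂))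
  simpa only [transpose_mul_mul_mul_transpose_of_mem_SO hR₁ hR₂] using
    (hV.comp_mul_mul R₁ᵀ R₂ᵀ).le_lscPcEnvelope hV' (R₁ * F * R₂)

/-- The lsc-polyconvex envelope of an isotropic function is isotropic. -/
theorem stmt17 (W : Mat 2 → EReal) (hW : Isotropic W) :
    Isotropic (lscPcEnvelope W) := by
  intro F R₁ R₂ hR₁ hR₂
  refine le_antisymm ?_ (lscPcEnvelope_le_apply_mul_mul hW hR₁ hR₂ F)
  simpa only [transpose_mul_mul_mul_transpose_of_mem_SO hR₁ hR₂] using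
    lscPcEnvelope_le_apply_mul_mul hW (transpose_mem_SO hR₁) (transpose_mem_SO hR₂) (R₁ * F * R₂)
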